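/- Let K, L be positive integers, A ∈ ℂ^{K×L} with A†A invertible, τ^r ∈ ℝ, A^r = diag(a(τ^r))·A, and P = P_n(A^r). Suppose h_s = A·c for some c ∈ ℂ^L (i.e., h_s lies in the column span of A, the signal subspace). Then for every τ̃ ∈ ℝ the TO-residual objective G(τ̃) = Re( h_s† · diag(a(τ̃)) · P · diag(a(τ̃))† · h_s ) satisfies G(τ̃) ≥ 0, and G(−τ^r) = 0; i.e., the objective attains its minimum value 0 at the delay shift that exactly compensates the TO residual τ^r. -/
import Mathlib


open Matrix

noncomputable section

/-- Steering vector of delay `τ`: entries `exp(−2πi·k·Δf·τ)`, k = 0,…,K−1. -/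
def steer (K : ℕ) (Δf τ : ℝ) : Fin K → ℂ :=
  fun k => Complex.exp (-(2 * (Real.pi : ℂ) * Complex.I * ((k : ℕ) : ℂ) * (Δf : ℂ) * (τ : ℂ)))

/-- Noise-subspace projection matrix `Pₙ(A) = I − A(A†A)⁻¹A†`. -/
def Pn {K L : ℕ} (A : Matrix (Fin K) (Fin L) ℂ) : Matrix (Fin K) (Fin K) ℂ :=
  1 - A * (Aᴴ * A)⁻¹ * Aᴴ

lemma steer_conj (K : ℕ) (Δf τ : ℝ) : star (steer K Δf τ) = steer K Δf (-τ) := by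
  funext k
  simp only [Pi.star_apply, steer, Complex.star_def, ← Complex.exp_conj, map_neg, _root_.map_mul,
    Complex.conj_I, Complex.conj_ofReal, map_ofNat, Complex.conj_natCast]
  push_cast
  ring_nf

lemma steer_star_mul (K : ℕ) (Δf τ : ℝ) : star (steer K Δf τ) * steer K Δf τ = 1 := by
  funext k
  rw [steer_conj]
  simp only [Pi.mul_apply, steer, ← Complex.exp_add, Pi.one_apply]
  rw [← Complex.exp_zero]
  congr 1
  push_cast
  ring

section aux
variable {K L : ℕ} (A : Matrix (Fin K) (Fin L) ℂ)

lemma gram_diag (d : Fin K → ℂ) (hd : star d * d = 1) :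
    (Matrix.diagonal d * A)ᴴ * (Matrix.diagonal d * A) = Aᴴ * A := by
  rw [conjTranspose_mul, diagonal_conjTranspose]
  calc Aᴴ * Matrix.diagonal (star d) * (Matrix.diagonal d * A)
      = Aᴴ * (Matrix.diagonal (star d) * Matrix.diagonal d) * A := by
        simp only [Matrix.mul_assoc]
    _ = Aᴴ * A := by
        rw [diagonal_mul_diagonal, show (fun i => star d i * d i) = (1 : Fin K → ℂ) from hd,
          show Matrix.diagonal (1 : Fin K → ℂ) = 1 by ext i j; simp [Matrix.diagonal, Matrix.one_apply], Matrix.mul_one]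

lemma Pn_conjTranspose : (Pn A)ᴴ = Pn A := by
  have h : ((Aᴴ * A)⁻¹)ᴴ = (Aᴴ * A)⁻¹ := by
    rw [conjTranspose_nonsing_inv, conjTranspose_mul, conjTranspose_conjTranspose]
  simp [Pn, conjTranspose_mul, h, Matrix.mul_assoc]

lemma Pn_mul_self (hA : IsUnit (Aᴴ * A)) : Pn A * Pn A = Pn A := by
  have hdet : IsUnit (Aᴴ * A).det := (isUnit_iff_isUnit_det _).mp hA
  have hinv : (Aᴴ * A)⁻¹ * (Aᴴ * A) = 1 := nonsing_inv_mul _ hdet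
  simp only [Pn, Matrix.sub_mul, Matrix.mul_sub, Matrix.one_mul, Matrix.mul_one]
  have : A * (Aᴴ * A)⁻¹ * Aᴴ * (A * (Aᴴ * A)⁻¹ * Aᴴ)
      = A * (Aᴴ * A)⁻¹ * Aᴴ := by
    calc A * (Aᴴ * A)⁻¹ * Aᴴ * (A * (Aᴴ * A)⁻¹ * Aᴴ)
        = A * ((Aᴴ * A)⁻¹ * (Aᴴ * A)) * ((Aᴴ * A)⁻¹ * Aᴴ) := by
          simp only [Matrix.mul_assoc]
      _ = A * (Aᴴ * A)⁻¹ * Aᴴ := by rw [hinv, Matrix.mul_one, Matrix.mul_assoc]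
  rw [this]
  abel

lemma Pn_mul_left (hA : IsUnit (Aᴴ * A)) : Pn A * A = 0 := by
  have hdet : IsUnit (Aᴴ * A).det := (isUnit_iff_isUnit_det _).mp hA
  have hinv : (Aᴴ * A)⁻¹ * (Aᴴ * A) = 1 := nonsing_inv_mul _ hdet
  simp only [Pn, Matrix.sub_mul, Matrix.one_mul, Matrix.mul_assoc, hinv, Matrix.mul_one,
    sub_self]

end aux

lemma star_dot_mulVec' {K : ℕ} (M : Matrix (Fin K) (Fin K) ℂ) (x : Fin K → ℂ) (u : Fin K → ℂ) :
    star x ⬝ᵥ (M *ᵥ u) = star (Mᴴ *ᵥ x) ⬝ᵥ u := by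
  rw [star_mulVec, conjTranspose_conjTranspose, dotProduct_mulVec]

lemma re_star_dot_self_nonneg {K : ℕ} (y : Fin K → ℂ) : 0 ≤ (star y ⬝ᵥ y).re := by
  simp only [dotProduct, Pi.star_apply, Complex.re_sum]
  apply Finset.sum_nonneg
  intro i _
  rw [Complex.star_def, Complex.conj_mul', ← Complex.ofReal_pow, Complex.ofReal_re]
  positivity


/-- with `A^r = diag(a(τ^r))·A`, `P = Pₙ(A^r)`, and `h_s = A·c` in the signal
subspace, the TO-residual objective
`G(τ̃) = Re(h_s† · diag(a(τ̃)) · P · diag(a(τ̃))† · h_s)` is nonnegative and vanishes at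
`τ̃ = −τ^r`. -/
theorem TO_residual_compensation_correct
    (K L : ℕ) (hK : 0 < K) (hL : 0 < L) (Δf : ℝ) (hΔf : 0 < Δf)
    (A : Matrix (Fin K) (Fin L) ℂ) (hA : IsUnit (Aᴴ * A)) (τr : ℝ) (c : Fin L → ℂ) :
    (∀ τ : ℝ,
      0 ≤ (star (A *ᵥ c) ⬝ᵥ ((Matrix.diagonal (steer K Δf τ) *
          Pn (Matrix.diagonal (steer K Δf τr) * A) *
          (Matrix.diagonal (steer K Δf τ))ᴴ) *ᵥ (A *ᵥ c))).re) ∧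
    (star (A *ᵥ c) ⬝ᵥ ((Matrix.diagonal (steer K Δf (-τr)) *
        Pn (Matrix.diagonal (steer K Δf τr) * A) *
        (Matrix.diagonal (steer K Δf (-τr)))ᴴ) *ᵥ (A *ᵥ c))).re = 0 := by
  set Ar := Matrix.diagonal (steer K Δf τr) * A with hAr
  set P := Pn Ar with hP
  have hgram : Arᴴ * Ar = Aᴴ * A := gram_diag A _ (steer_star_mul K Δf τr)
  have hArA : IsUnit (Arᴴ * Ar) := hgram ▸ hA
  have hPH : Pᴴ = P := Pn_conjTranspose Ar
  have hPP : P * P = P := Pn_mul_self Ar hArA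
  have key : ∀ τ : ℝ,
      (star (A *ᵥ c) ⬝ᵥ ((Matrix.diagonal (steer K Δf τ) * P *
          (Matrix.diagonal (steer K Δf τ))ᴴ) *ᵥ (A *ᵥ c)))
      = star (P *ᵥ ((Matrix.diagonal (steer K Δf τ))ᴴ *ᵥ (A *ᵥ c)))
          ⬝ᵥ (P *ᵥ ((Matrix.diagonal (steer K Δf τ))ᴴ *ᵥ (A *ᵥ c))) := by
    intro τ
    set D := Matrix.diagonal (steer K Δf τ)
    set x := A *ᵥ c
    have e1 : (D * P * Dᴴ) *ᵥ x = D *ᵥ (P *ᵥ (Dᴴ *ᵥ x)) := by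
      rw [← mulVec_mulVec, ← mulVec_mulVec]
    rw [e1, star_dot_mulVec']
    set w := Dᴴ *ᵥ x with hw
    conv_lhs => rw [← hPP]
    rw [← mulVec_mulVec, star_dot_mulVec', hPH]
  constructor
  · intro τ
    rw [key τ]
    exact re_star_dot_self_nonneg _
  · rw [key (-τr)]
    have hDH : (Matrix.diagonal (steer K Δf (-τr)))ᴴ = Matrix.diagonal (steer K Δf τr) := by
      rw [diagonal_conjTranspose, steer_conj, neg_neg]
    have : P *ᵥ ((Matrix.diagonal (steer K Δf (-τr)))ᴴ *ᵥ (A *ᵥ c)) = 0 := by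
      rw [hDH, mulVec_mulVec, mulVec_mulVec, Matrix.mul_assoc, ← hAr, hP,
        Pn_mul_left Ar hArA, zero_mulVec]
    rw [this]
    simp
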